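/- For every δ ∈ (0,1), the function k_δ : [0,1] → ℝ defined by k_δ(x) = (1−x)·x²·(1+√(1−δ))²/8 + δx³/12 attains its maximum over [0,1] at the unique point x* = min{ (4√(1−δ) − 2δ + 4)/(6√(1−δ) − 5δ + 6), 1 }, and x* = 1 if and only if δ ≥ 8/9. -/
import Mathlib


/-- Seller's ex-ante expected profit from the at-will dynamic mechanism without a second
opportunity (D1) with time-0 acceptance threshold `x` in the uniform example:
`k_δ(x) = (1−x)·x²·(1+√(1−δ))²/8 + δx³/12`. -/
noncomputable def kD1 (δ x : ℝ) : ℝ :=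
  (1 - x) * x^2 * (1 + Real.sqrt (1 - δ))^2 / 8 + δ * x^3 / 12

/-- The claimed maximizer `x* = min{(4√(1−δ) − 2δ + 4)/(6√(1−δ) − 5δ + 6), 1}`. -/
noncomputable def xStarD1 (δ : ℝ) : ℝ :=
  min ((4 * Real.sqrt (1 - δ) - 2 * δ + 4) / (6 * Real.sqrt (1 - δ) - 5 * δ + 6)) 1

/-- for every `δ ∈ (0,1)`, `k_δ` attains its maximum over `[0,1]` at the
unique point `x* = min{(4√(1−δ) − 2δ + 4)/(6√(1−δ) − 5δ + 6), 1}`, and `x* = 1` iff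
`δ ≥ 8/9`. -/
theorem stmt18 (δ : ℝ) (hδ : δ ∈ Set.Ioo (0:ℝ) 1) :
    xStarD1 δ ∈ Set.Icc (0:ℝ) 1 ∧
    (∀ x ∈ Set.Icc (0:ℝ) 1, x ≠ xStarD1 δ → kD1 δ x < kD1 δ (xStarD1 δ)) ∧
    (xStarD1 δ = 1 ↔ 8/9 ≤ δ) := by
  obtain ⟨hδ0, hδ1⟩ := hδ
  have h1δ : (0:ℝ) < 1 - δ := by linarith
  set s := Real.sqrt (1 - δ) with hs_def
  have hs0 : 0 < s := Real.sqrt_pos.2 h1δ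
  have hssq : s ^ 2 = 1 - δ := Real.sq_sqrt h1δ.le
  have hs1 : s < 1 := by nlinarith
  have hδeq : δ = 1 - s ^ 2 := by linarith
  have hden5 : (0:ℝ) < 1 + 5 * s := by linarith
  have hden : (0:ℝ) < 6 * s - 5 * δ + 6 := by nlinarith
  have hfrac : (4 * s - 2 * δ + 4) / (6 * s - 5 * δ + 6) = 2 * (1 + s) / (1 + 5 * s) := by
    rw [div_eq_div_iff hden.ne' hden5.ne']
    linear_combination (8:ℝ) * hssq
  have hxs : xStarD1 δ = min (2 * (1 + s) / (1 + 5 * s)) 1 := by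
    unfold xStarD1
    rw [← hs_def, hfrac]
  set c := 2 * (1 + s) / (1 + 5 * s) with hc_def
  have hc0 : 0 < c := by positivity
  have hciff : 1 ≤ c ↔ 8 / 9 ≤ δ := by
    rw [hc_def, le_div_iff₀ hden5, one_mul]
    constructor
    · intro h
      have hs3 : s ≤ 1 / 3 := by linarith
      nlinarith
    · intro h
      have hs3 : s ≤ 1 / 3 := by nlinarith
      linarith
  -- rewrite kD1 in terms of s
  have hk : ∀ y : ℝ, kD1 δ y =
      (1 - y) * y ^ 2 * (1 + s) ^ 2 / 8 + (1 - s ^ 2) * y ^ 3 / 12 := by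
    intro y
    unfold kD1
    rw [← hs_def]
    linear_combination (y ^ 3 / 12) * hssq
  refine ⟨?_, ?_, ?_⟩
  · rw [hxs]
    exact ⟨le_min hc0.le zero_le_one, min_le_right _ _⟩
  · intro x hx hne
    rw [hxs] at hne ⊢
    obtain ⟨hx0, hx1⟩ := hx
    by_cases hc1 : c ≤ 1
    · rw [min_eq_left hc1] at hne ⊢
      have key : kD1 δ c - kD1 δ x =
          (1 + s) * (1 + 5 * s) / 48 * (x - c) ^ 2 * (2 * x + c) := by
        rw [hk, hk, hc_def]
        field_simp
        ring
      have h2 : 0 < (x - c) ^ 2 :=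
        (sq_nonneg _).lt_of_ne (Ne.symm (pow_ne_zero 2 (sub_ne_zero.2 hne)))
      have h3 : 0 < 2 * x + c := by linarith
      have hb : 0 < (1 + s) * (1 + 5 * s) / 48 := by positivity
      nlinarith [mul_pos (mul_pos hb h2) h3]
    · rw [min_eq_right (by linarith : (1:ℝ) ≤ c)] at hne ⊢
      push_neg at hc1
      have hclt : 1 + 5 * s < 2 * (1 + s) := by
        rw [hc_def, lt_div_iff₀ hden5, one_mul] at hc1
        linarith
      have hs3 : s < 1 / 3 := by linarith
      have hx1' : x < 1 := lt_of_le_of_ne hx1 hne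
      rw [hk, hk]
      nlinarith [mul_nonneg (mul_nonneg (sub_nonneg.2 hx1'.le) hx0) hs0.le,
        mul_pos (sub_pos.2 hx1') hs0, sq_nonneg (1 - x), sq_nonneg x,
        mul_nonneg (sq_nonneg (1 - x)) hx0,
        mul_nonneg (mul_nonneg (sq_nonneg (1 - x)) hx0) hs0.le,
        mul_nonneg (sq_nonneg (1 - x)) hs0.le]
  · rw [hxs, min_eq_right_iff, hciff]
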